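/- If Null(Φ) ∩ 𝒦 ∩ 𝒫 = {0}, then the set of minimizers of the problem min_{Θ ∈ 𝒦 ∩ 𝒫} ‖Y − ΦΘ‖_F² is a bounded subset of ℝ^{n×L}: there exists C > 0 such that every X ∈ 𝒦 ∩ 𝒫 satisfying ‖Y − ΦX‖_F ≤ ‖Y − ΦΘ‖_F for all Θ ∈ 𝒦 ∩ 𝒫 has ‖X‖_F ≤ C. -/

import Mathlib

/-- Frobenius norm of a real matrix. -/
noncomputable def frob {a b : ℕ} (A : Matrix (Fin a) (Fin b) ℝ) : ℝ :=
  Real.sqrt (∑ i, ∑ j, (A i j) ^ 2)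

/-- The set of a×b matrices whose every column has at most k nonzero entries. -/
def colSparse (a b k : ℕ) : Set (Matrix (Fin a) (Fin b) ℝ) :=
  {Θ | ∀ l, ({i | Θ i l ≠ 0} : Set (Fin a)).ncard ≤ k}

/-- The set of a×b matrices having at most p nonzero rows. -/
def rowSparse (a b p : ℕ) : Set (Matrix (Fin a) (Fin b) ℝ) :=
  {Θ | ({i | ∃ l, Θ i l ≠ 0} : Set (Fin a)).ncard ≤ p}

/-! 𝒦 ∩ 𝒫 is a closed cone on which `Θ ↦ ΦΘ` vanishes only at `0`, so by compactness of its
intersection with the unit sphere there is `δ > 0` with `δ ‖X‖_F ≤ ‖ΦX‖_F` on 𝒦 ∩ 𝒫.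
Comparing a minimizer `X` with the feasible point `0` gives `‖Y - ΦX‖_F ≤ ‖Y‖_F`, hence
`‖ΦX‖_F ≤ 2 ‖Y‖_F` and `‖X‖_F ≤ 2 ‖Y‖_F / δ`. -/

open Filter Topology

section ConeBound

variable {E F : Type*} [NormedAddCommGroup E] [NormedSpace ℝ E] [FiniteDimensional ℝ E]
  [NormedAddCommGroup F] [NormedSpace ℝ F]

theorem exists_pos_mul_norm_le_norm_map_of_cone (f : E →ₗ[ℝ] F) {S : Set E} (hS : IsClosed S)
    (hsmul : ∀ c : ℝ, 0 < c → ∀ x ∈ S, c • x ∈ S) (hker : ∀ x ∈ S, f x = 0 → x = 0) :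
    ∃ δ > 0, ∀ x ∈ S, δ * ‖x‖ ≤ ‖f x‖ := by
  have hK : IsCompact (S ∩ Metric.sphere 0 1) := (isCompact_sphere 0 1).inter_left hS
  have hpos : ∀ x ∈ S ∩ Metric.sphere 0 1, 0 < ‖f x‖ := fun x ⟨hxS, hx1⟩ =>
    norm_pos_iff.2 fun h => by simp [hker x hxS h] at hx1
  obtain ⟨δ, hδ, hδK⟩ :=
    hK.exists_forall_le' f.continuous_of_finiteDimensional.norm.continuousOn hpos
  refine ⟨δ, hδ, fun x hx => ?_⟩
  rcases eq_or_ne x 0 with rfl | hx0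
  · simp
  have hxpos : 0 < ‖x‖ := norm_pos_iff.2 hx0
  have := hδK (‖x‖⁻¹ • x) ⟨hsmul _ (inv_pos.2 hxpos) x hx, by simp [norm_smul, hxpos.ne']⟩
  rwa [map_smul, norm_smul, norm_inv, norm_norm, le_inv_mul_iff₀ hxpos, mul_comm] at this

theorem isBounded_setOf_isMinOn_norm_sub (f : E →ₗ[ℝ] F) {S : Set E} (hS : IsClosed S)
    (hsmul : ∀ c : ℝ, 0 < c → ∀ x ∈ S, c • x ∈ S) (hker : ∀ x ∈ S, f x = 0 → x = 0)
    (h0 : (0 : E) ∈ S) (y : F) :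
    Bornology.IsBounded {x ∈ S | IsMinOn (fun z => ‖y - f z‖) S x} := by
  obtain ⟨δ, hδ, hδS⟩ := exists_pos_mul_norm_le_norm_map_of_cone f hS hsmul hker
  refine (Metric.isBounded_closedBall (x := 0) (r := 2 * ‖y‖ / δ)).subset fun x ⟨hxS, hmin⟩ => ?_
  have hres : ‖y - f x‖ ≤ ‖y‖ := by simpa using hmin h0
  have hfx : ‖f x‖ ≤ 2 * ‖y‖ := by
    calc ‖f x‖ = ‖y - (y - f x)‖ := by rw [sub_sub_cancel]
      _ ≤ ‖y‖ + ‖y - f x‖ := norm_sub_le _ _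
      _ ≤ 2 * ‖y‖ := by linarith
  rw [mem_closedBall_zero_iff, le_div_iff₀ hδ, mul_comm]
  exact (hδS x hxS).trans hfx

end ConeBound

theorem lowerSemicontinuous_ncard_support {X ι M : Type*} [TopologicalSpace X] [Finite ι]
    [Zero M] [TopologicalSpace M] [T1Space M] {g : X → ι → M} (hg : Continuous g) :
    LowerSemicontinuous fun x => (Function.support (g x)).ncard := by
  intro x₀ k hk
  have hsupp : ∀ᶠ x in 𝓝 x₀, Function.support (g x₀) ⊆ Function.support (g x) := by
    refine (eventually_all.2 fun i => ?_).mono fun x hx i => hx i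
    by_cases h : g x₀ i = 0
    · simp [h]
    · exact (((continuous_apply i).comp hg).continuousAt.eventually_ne h).mono fun x hx _ => hx
  exact hsupp.mono fun x hx => hk.trans_le (Set.ncard_le_ncard hx (Set.toFinite _))

section Sparse

variable {a b : ℕ}

theorem isClosed_colSparse (k : ℕ) : IsClosed (colSparse a b k) := by
  rw [colSparse, Set.ofPred_forall]
  exact isClosed_iInter fun l =>
    (lowerSemicontinuous_ncard_support (g := fun (Θ : Matrix (Fin a) (Fin b) ℝ) i => Θ i l)
      (by fun_prop)).isClosed_preimage k

theorem rowSparse_eq (p : ℕ) :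
    rowSparse a b p =
      {Θ : Matrix (Fin a) (Fin b) ℝ | (Function.support fun i => Θ i).ncard ≤ p} := by
  simp only [rowSparse, Function.support, Function.ne_iff, Pi.zero_apply]

theorem isClosed_rowSparse (p : ℕ) : IsClosed (rowSparse a b p) := by
  rw [rowSparse_eq]
  exact (lowerSemicontinuous_ncard_support continuous_id).isClosed_preimage p

theorem smul_mem_colSparse {k : ℕ} (c : ℝ) {Θ : Matrix (Fin a) (Fin b) ℝ}
    (h : Θ ∈ colSparse a b k) : c • Θ ∈ colSparse a b k := fun l =>
  (Set.ncard_le_ncard (fun _ hi => right_ne_zero_of_mul hi) (Set.toFinite _)).trans (h l)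

theorem smul_mem_rowSparse {p : ℕ} (c : ℝ) {Θ : Matrix (Fin a) (Fin b) ℝ}
    (h : Θ ∈ rowSparse a b p) : c • Θ ∈ rowSparse a b p := by
  rw [rowSparse_eq] at h ⊢
  exact (Set.ncard_le_ncard (Function.support_const_smul_subset c _) (Set.toFinite _)).trans h

theorem zero_mem_colSparse_inter_rowSparse (k p : ℕ) :
    (0 : Matrix (Fin a) (Fin b) ℝ) ∈ colSparse a b k ∩ rowSparse a b p := by
  simp [colSparse, rowSparse]

end Sparse

attribute [local instance] Matrix.frobeniusNormedAddCommGroup Matrix.frobeniusNormedSpace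

theorem frob_eq_norm {a b : ℕ} (A : Matrix (Fin a) (Fin b) ℝ) : frob A = ‖A‖ := by
  simp only [frob, Matrix.frobenius_norm_def, Real.norm_eq_abs, Real.rpow_two, sq_abs,
    Real.sqrt_eq_rpow]

theorem stmt_1_general (m n L k p : ℕ)
    (Φ : Matrix (Fin m) (Fin n) ℝ) (Y : Matrix (Fin m) (Fin L) ℝ)
    (hnull : {Θ : Matrix (Fin n) (Fin L) ℝ | Φ * Θ = 0} ∩ colSparse n L k ∩ rowSparse n L p
      = {0}) :
    ∃ C : ℝ, 0 < C ∧
      ∀ X ∈ colSparse n L k ∩ rowSparse n L p,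
        (∀ Θ ∈ colSparse n L k ∩ rowSparse n L p, frob (Y - Φ * X) ≤ frob (Y - Φ * Θ)) →
          frob X ≤ C := by
  have hker : ∀ X ∈ colSparse n L k ∩ rowSparse n L p, Φ * X = 0 → X = 0 :=
    fun X hX hΦX => hnull.subset ⟨⟨hΦX, hX.1⟩, hX.2⟩
  obtain ⟨C, hC, hbound⟩ := (isBounded_setOf_isMinOn_norm_sub (mulLeftLinearMap (Fin L) ℝ Φ)
    ((isClosed_colSparse k).inter (isClosed_rowSparse p))
    (fun c _ X hX => ⟨smul_mem_colSparse c hX.1, smul_mem_rowSparse c hX.2⟩) hker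
    (zero_mem_colSparse_inter_rowSparse k p) Y).exists_pos_norm_le
  refine ⟨C, hC, fun X hX hmin => ?_⟩
  rw [frob_eq_norm]
  exact hbound X ⟨hX, isMinOn_iff.2 fun Θ hΘ => by
    simpa only [frob_eq_norm, mulLeftLinearMap_apply] using hmin Θ hΘ⟩

theorem stmt_1 (m n L k p : ℕ) (hm : 0 < m) (hn : 0 < n) (hL : 0 < L)
    (hk : 0 < k) (hp : 0 < p)
    (Φ : Matrix (Fin m) (Fin n) ℝ) (Y : Matrix (Fin m) (Fin L) ℝ)
    (hnull : {Θ : Matrix (Fin n) (Fin L) ℝ | Φ * Θ = 0} ∩ colSparse n L k ∩ rowSparse n L p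
      = {0}) :
    ∃ C : ℝ, 0 < C ∧
      ∀ X ∈ colSparse n L k ∩ rowSparse n L p,
        (∀ Θ ∈ colSparse n L k ∩ rowSparse n L p, frob (Y - Φ * X) ≤ frob (Y - Φ * Θ)) →
          frob X ≤ C :=
  stmt_1_general m n L k p Φ Y hnull
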